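/- Let P be a real polynomial with deg P ≥ 1 and P(0) = 1, and f_σ(x) = (1/(σ√(2π)))e^{-x²/(2σ²)}. There is a constant C_P > 1 depending only on P such that for all σ > 1 and x ∈ ℝ, |P(D)(f_σ)(x) - f_σ(x)| ≤ C_P·(1/σ + |x|/σ² + (|x|/σ²)^{deg P})·f_σ(x). -/

import Mathlib

noncomputable def gaussDensity (σ : ℝ) (x : ℝ) : ℝ :=
  (1 / (σ * Real.sqrt (2 * Real.pi))) * Real.exp (-x ^ 2 / (2 * σ ^ 2))

noncomputable def polyD (P : Polynomial ℝ) (f : ℝ → ℝ) (x : ℝ) : ℝ :=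
  ∑ i ∈ Finset.range (P.natDegree + 1), P.coeff i * iteratedDeriv i f x

open Polynomial Finset

private lemma gaussCD : ContDiff ℝ (⊤ : ℕ∞) (fun y : ℝ => Real.exp (-(y ^ 2 / 2))) :=
  (((contDiff_id.pow 2).div_const 2).neg).exp

private lemma iterD_gauss (σ : ℝ) (hσ : 0 < σ) (k : ℕ) (x : ℝ) :
    iteratedDeriv k (gaussDensity σ) x =
      (-1 : ℝ) ^ k * Polynomial.aeval (x / σ) (Polynomial.hermite k) / σ ^ k *
        gaussDensity σ x := by
  have hσ0 : σ ≠ 0 := hσ.ne'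
  have hfun : gaussDensity σ =
      fun x => (1 / (σ * Real.sqrt (2 * Real.pi))) *
        (fun y : ℝ => Real.exp (-(y ^ 2 / 2))) (σ⁻¹ * x) := by
    funext x
    simp only [gaussDensity]
    have h2 : -((σ⁻¹ * x) ^ 2 / 2) = -x ^ 2 / (2 * σ ^ 2) := by
      field_simp
    rw [h2]
  have hcomp : ContDiff ℝ (k : ℕ∞)
      (fun x : ℝ => (fun y : ℝ => Real.exp (-(y ^ 2 / 2))) (σ⁻¹ * x)) :=
    (gaussCD.of_le (mod_cast le_top)).comp (contDiff_const.mul contDiff_id)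
  rw [hfun]
  rw [← iteratedDerivWithin_univ,
    iteratedDerivWithin_const_mul (Set.mem_univ x) uniqueDiffOn_univ _ hcomp.contDiffWithinAt,
    iteratedDerivWithin_univ]
  rw [iteratedDeriv_comp_const_mul (gaussCD.of_le (mod_cast le_top)) σ⁻¹]
  rw [iteratedDeriv_eq_iterate]
  beta_reduce
  rw [Polynomial.deriv_gaussian_eq_hermite_mul_gaussian]
  have h1 : σ⁻¹ * x = x / σ := by field_simp
  rw [h1]
  have hexp : Real.exp (-((x / σ) ^ 2 / 2)) = Real.exp (-x ^ 2 / (2 * σ ^ 2)) := by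
    congr 1
    field_simp
  simp only [hexp]
  field_simp
  rw [one_div_pow, mul_comm, ← mul_assoc, mul_one_div_cancel (pow_ne_zero _ hσ0), one_mul]

private lemma hermite_bound (k : ℕ) (y : ℝ) :
    |(Polynomial.aeval y (Polynomial.hermite k) : ℝ)| ≤
      (∑ i ∈ Finset.range (k + 1), |((Polynomial.hermite k).coeff i : ℝ)|) * (1 + |y|) ^ k := by
  have hQ : (Polynomial.aeval y (Polynomial.hermite k) : ℝ) =
      ((Polynomial.hermite k).map (Int.castRingHom ℝ)).eval y := by
    rw [Polynomial.eval_map, Polynomial.aeval_def]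
    rfl
  have hdeg : ((Polynomial.hermite k).map (Int.castRingHom ℝ)).natDegree < k + 1 :=
    Nat.lt_succ_of_le (Polynomial.natDegree_map_le.trans
      (by rw [Polynomial.natDegree_hermite]))
  rw [hQ, Polynomial.eval_eq_sum_range' hdeg]
  calc |∑ i ∈ range (k + 1), ((Polynomial.hermite k).map (Int.castRingHom ℝ)).coeff i * y ^ i|
      ≤ ∑ i ∈ range (k + 1), |((Polynomial.hermite k).coeff i : ℝ) * y ^ i| := by
        refine (abs_sum_le_sum_abs _ _).trans_eq ?_
        simp [Polynomial.coeff_map]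
    _ ≤ ∑ i ∈ range (k + 1), |((Polynomial.hermite k).coeff i : ℝ)| * (1 + |y|) ^ k := by
        apply Finset.sum_le_sum
        intro i hi
        rw [abs_mul, abs_pow]
        apply mul_le_mul_of_nonneg_left _ (abs_nonneg _)
        calc |y| ^ i ≤ (1 + |y|) ^ i :=
              pow_le_pow_left₀ (abs_nonneg _) (by linarith [abs_nonneg y]) _
          _ ≤ (1 + |y|) ^ k := pow_le_pow_right₀ (by linarith [abs_nonneg y])
              (Nat.lt_succ_iff.mp (Finset.mem_range.mp hi))
    _ = _ := by rw [← Finset.sum_mul]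

private lemma pow_le_add' (t : ℝ) (ht : 0 ≤ t) {k n : ℕ} (hk : 1 ≤ k) (hkn : k ≤ n) :
    t ^ k ≤ t + t ^ n := by
  rcases le_total t 1 with h | h
  · have : t ^ k ≤ t ^ 1 := pow_le_pow_of_le_one ht h hk
    simpa using this.trans (by nlinarith [pow_nonneg ht n])
  · have : t ^ k ≤ t ^ n := pow_le_pow_right₀ h hkn
    nlinarith

private lemma two_pow_bound' (a b : ℝ) (ha : 0 ≤ a) (hb : 0 ≤ b) (k : ℕ) :
    (a + b) ^ k ≤ 2 ^ k * (a ^ k + b ^ k) := by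
  have h1 : a + b ≤ 2 * max a b := by
    rcases le_total a b with h | h <;> simp [max_eq_right, max_eq_left, h] <;> linarith
  calc (a + b) ^ k ≤ (2 * max a b) ^ k := pow_le_pow_left₀ (by positivity) h1 _
    _ = 2 ^ k * (max a b) ^ k := by rw [mul_pow]
    _ ≤ 2 ^ k * (a ^ k + b ^ k) := by
        apply mul_le_mul_of_nonneg_left _ (by positivity)
        rcases le_total a b with h | h
        · rw [max_eq_right h]; nlinarith [pow_nonneg ha k]
        · rw [max_eq_left h]; nlinarith [pow_nonneg hb k]

theorem polyD_gauss_estimate (P : Polynomial ℝ) (hdeg : 1 ≤ P.natDegree) (hP : P.eval 0 = 1) :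
    ∃ C : ℝ, 1 < C ∧ ∀ σ : ℝ, 1 < σ → ∀ x : ℝ,
      |polyD P (gaussDensity σ) x - gaussDensity σ x| ≤
        C * (1 / σ + |x| / σ ^ 2 + (|x| / σ ^ 2) ^ P.natDegree) * gaussDensity σ x := by
  set n := P.natDegree with hn
  set M : ℕ → ℝ := fun k => ∑ i ∈ range (k + 1), |((Polynomial.hermite k).coeff i : ℝ)|
    with hMdef
  have hM : ∀ k, 0 ≤ M k := fun k => Finset.sum_nonneg fun i _ => abs_nonneg _
  set T : ℝ := ∑ k ∈ range (n + 1), |P.coeff k| * M k * 2 ^ k with hT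
  have hT0 : 0 ≤ T := Finset.sum_nonneg fun k _ => by positivity
  refine ⟨2 + T, by linarith, ?_⟩
  intro σ hσ x
  have hσ0 : (0 : ℝ) < σ := by linarith
  have hg : 0 < gaussDensity σ x := by
    unfold gaussDensity
    have h2π : 0 < Real.sqrt (2 * Real.pi) := Real.sqrt_pos.mpr (by positivity)
    positivity
  set t : ℝ := |x| / σ ^ 2 with ht
  have ht0 : 0 ≤ t := by positivity
  set E : ℝ := 1 / σ + t + t ^ n with hE
  have hE0 : 0 ≤ E := by positivity
  -- per-term estimate
  have hterm : ∀ k : ℕ, 1 ≤ k → k ≤ n →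
      |iteratedDeriv k (gaussDensity σ) x| ≤ M k * 2 ^ k * (E * gaussDensity σ x) := by
    intro k hk1 hkn
    rw [iterD_gauss σ hσ0 k x, abs_mul, abs_of_pos hg, abs_div, abs_mul, abs_pow, abs_neg,
      abs_one, one_pow, one_mul, abs_pow, abs_of_pos hσ0]
    have step1 : |(Polynomial.aeval (x / σ) (Polynomial.hermite k) : ℝ)| / σ ^ k ≤
        M k * (2 ^ k * E) := by
      have h1 : |(Polynomial.aeval (x / σ) (Polynomial.hermite k) : ℝ)| / σ ^ k ≤
          M k * ((1 + |x / σ|) ^ k / σ ^ k) := by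
        rw [mul_div_assoc']
        exact div_le_div_of_nonneg_right (hermite_bound k (x / σ)) (by positivity)
      refine h1.trans (mul_le_mul_of_nonneg_left ?_ (hM k))
      have h2 : (1 + |x / σ|) ^ k / σ ^ k = (1 / σ + t) ^ k := by
        rw [← div_pow]
        congr 1
        rw [abs_div, abs_of_pos hσ0, ht]
        field_simp
      rw [h2]
      calc (1 / σ + t) ^ k ≤ 2 ^ k * ((1 / σ) ^ k + t ^ k) :=
            two_pow_bound' _ _ (by positivity) ht0 k
        _ ≤ 2 ^ k * E := by
            apply mul_le_mul_of_nonneg_left _ (by positivity)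
            have ha : (1 / σ) ^ k ≤ 1 / σ := by
              rw [one_div_pow]
              apply one_div_le_one_div_of_le hσ0
              exact le_self_pow₀ (by linarith) (by omega)
            have hb : t ^ k ≤ t + t ^ n := pow_le_add' t ht0 hk1 hkn
            rw [hE]; linarith
    calc |(Polynomial.aeval (x / σ) (Polynomial.hermite k) : ℝ)| / σ ^ k * gaussDensity σ x
        ≤ M k * (2 ^ k * E) * gaussDensity σ x :=
          mul_le_mul_of_nonneg_right step1 hg.le
      _ = M k * 2 ^ k * (E * gaussDensity σ x) := by ring
  -- split off the 0th term
  have hsplit : polyD P (gaussDensity σ) x - gaussDensity σ x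
      = ∑ i ∈ range n, P.coeff (i + 1) * iteratedDeriv (i + 1) (gaussDensity σ) x := by
    unfold polyD
    rw [Finset.sum_range_succ']
    have h0 : P.coeff 0 = 1 := by rw [Polynomial.coeff_zero_eq_eval_zero, hP]
    rw [h0]
    simp [iteratedDeriv_zero]
    rfl
  rw [hsplit]
  calc |∑ i ∈ range n, P.coeff (i + 1) * iteratedDeriv (i + 1) (gaussDensity σ) x|
      ≤ ∑ i ∈ range n, |P.coeff (i + 1)| * |iteratedDeriv (i + 1) (gaussDensity σ) x| := by
        refine (abs_sum_le_sum_abs _ _).trans_eq ?_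
        simp [abs_mul]
    _ ≤ ∑ i ∈ range n, |P.coeff (i + 1)| * (M (i + 1) * 2 ^ (i + 1) * (E * gaussDensity σ x)) := by
        apply Finset.sum_le_sum
        intro i hi
        exact mul_le_mul_of_nonneg_left
          (hterm (i + 1) (by omega) (Finset.mem_range.mp hi)) (abs_nonneg _)
    _ = (∑ i ∈ range n, |P.coeff (i + 1)| * M (i + 1) * 2 ^ (i + 1)) * (E * gaussDensity σ x) := by
        rw [Finset.sum_mul]
        congr 1
        funext i
        ring
    _ ≤ T * (E * gaussDensity σ x) := by
        apply mul_le_mul_of_nonneg_right _ (by positivity)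
        rw [hT, Finset.sum_range_succ']
        have : 0 ≤ |P.coeff 0| * M 0 * 2 ^ 0 := by positivity
        linarith
    _ ≤ (2 + T) * (1 / σ + |x| / σ ^ 2 + (|x| / σ ^ 2) ^ P.natDegree) * gaussDensity σ x := by
        have hEeq : E = 1 / σ + |x| / σ ^ 2 + (|x| / σ ^ 2) ^ P.natDegree := by
          rw [hE, ht, hn]
        rw [← hEeq, mul_assoc]
        apply mul_le_mul_of_nonneg_right _ (by positivity)
        linarith
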